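/- Let ξ > -1 and c ∈ ℝ with c ∉ {0, -1, -2, ...}. The operator L̃ = z d/dz + c, acting on Taylor coefficients by (a_k) ↦ ((k+c)a_k), extends to a bounded bijective linear map from A²_ξ onto A²_{ξ+2}, with bounded inverse. That is, there exist constants 0 < m ≤ M with m‖f‖_ξ ≤ ‖L̃f‖_{ξ+2} ≤ M‖f‖_ξ for all f ∈ A²_ξ, and every g ∈ A²_{ξ+2} is of the form L̃f for some f ∈ A²_ξ. -/
import Mathlib

lemma exists_pos_forall_le' (g : ℕ → ℝ) (hg : ∀ k, 0 < g k) (N : ℕ) (C : ℝ) (hC : 0 < C)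
    (h : ∀ k, N ≤ k → C ≤ g k) : ∃ m, 0 < m ∧ ∀ k, m ≤ g k := by
  refine ⟨min C ((Finset.range (N+1)).inf' ⟨0, by simp⟩ g), ?_, ?_⟩
  · exact lt_min hC ((Finset.lt_inf'_iff _).mpr (fun b _ => hg b))
  · intro k
    rcases le_or_gt N k with hk | hk
    · exact le_trans (min_le_left _ _) (h k hk)
    · exact le_trans (min_le_right _ _) (Finset.inf'_le _ (Finset.mem_range.mpr (by omega)))

set_option maxHeartbeats 1000000 in
/-- The operator L̃ = z d/dz + c, acting on coefficients by (a_k) ↦ ((k+c)a_k), extends to a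
bounded bijective linear map A²_ξ → A²_{ξ+2} with bounded inverse, when c is real and not
0 or a negative integer. A²_η is identified with the weighted ℓ²-space with weights
w_η(k) = k!/(η+2)_k. -/
theorem stmt_13 (ξ c : ℝ) (hξ : -1 < ξ) (hc : ∀ n : ℕ, c ≠ -(n : ℝ))
    (w : ℝ → ℕ → ℝ)
    (hw : ∀ η : ℝ, ∀ k : ℕ,
      w η k = (Nat.factorial k : ℝ) * Real.Gamma (η + 2) / Real.Gamma (k + η + 2)) :
    ∃ m M : ℝ, 0 < m ∧ m ≤ M ∧
      (∀ a : ℕ → ℂ, Summable (fun k => ‖a k‖ ^ 2 * w ξ k) →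
        Summable (fun k : ℕ => ‖((k : ℂ) + (c : ℂ)) * a k‖ ^ 2 * w (ξ + 2) k) ∧
        m * Real.sqrt (∑' k : ℕ, ‖a k‖ ^ 2 * w ξ k) ≤
          Real.sqrt (∑' k : ℕ, ‖((k : ℂ) + (c : ℂ)) * a k‖ ^ 2 * w (ξ + 2) k) ∧
        Real.sqrt (∑' k : ℕ, ‖((k : ℂ) + (c : ℂ)) * a k‖ ^ 2 * w (ξ + 2) k) ≤
          M * Real.sqrt (∑' k : ℕ, ‖a k‖ ^ 2 * w ξ k)) ∧
      (∀ b : ℕ → ℂ, Summable (fun k => ‖b k‖ ^ 2 * w (ξ + 2) k) →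
        ∃ a : ℕ → ℂ, Summable (fun k => ‖a k‖ ^ 2 * w ξ k) ∧
          ∀ k : ℕ, ((k : ℂ) + (c : ℂ)) * a k = b k) := by
  -- the multiplier g
  set g : ℕ → ℝ := fun k =>
    ((k:ℝ)+c)^2 * ((ξ+2)*(ξ+3)/(((k:ℝ)+ξ+2)*((k:ℝ)+ξ+3))) with hg_def
  -- weight ratio
  have hratio : ∀ k : ℕ, w (ξ+2) k = ((ξ+2)*(ξ+3)/(((k:ℝ)+ξ+2)*((k:ℝ)+ξ+3))) * w ξ k := by
    intro k
    have hk0 : (0:ℝ) ≤ (k:ℝ) := Nat.cast_nonneg k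
    have h1 : Real.Gamma (ξ+2+2) = (ξ+3)*((ξ+2)*Real.Gamma (ξ+2)) := by
      rw [show ξ+2+2 = (ξ+3)+1 by ring, Real.Gamma_add_one (by linarith),
          show ξ+3 = (ξ+2)+1 by ring, Real.Gamma_add_one (by linarith)]
    have h2 : Real.Gamma ((k:ℝ)+(ξ+2)+2) = ((k:ℝ)+ξ+3)*(((k:ℝ)+ξ+2)*Real.Gamma ((k:ℝ)+ξ+2)) := by
      rw [show (k:ℝ)+(ξ+2)+2 = ((k:ℝ)+ξ+3)+1 by ring, Real.Gamma_add_one (by linarith),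
          show (k:ℝ)+ξ+3 = ((k:ℝ)+ξ+2)+1 by ring, Real.Gamma_add_one (by linarith)]
    have hΓk : 0 < Real.Gamma ((k:ℝ)+ξ+2) := Real.Gamma_pos_of_pos (by linarith)
    rw [hw, hw, h1, h2]
    have e2 : ((k:ℝ)+ξ+2) ≠ 0 := by linarith
    have e3 : ((k:ℝ)+ξ+3) ≠ 0 := by linarith
    field_simp
  -- positivity of weights
  have hwpos : ∀ k : ℕ, 0 < w ξ k := by
    intro k
    have hk0 : (0:ℝ) ≤ (k:ℝ) := Nat.cast_nonneg k
    rw [hw]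
    have h1 : 0 < Real.Gamma (ξ+2) := Real.Gamma_pos_of_pos (by linarith)
    have h2 : 0 < Real.Gamma ((k:ℝ)+ξ+2) := Real.Gamma_pos_of_pos (by linarith)
    have h3 : 0 < (Nat.factorial k : ℝ) := by exact_mod_cast Nat.factorial_pos k
    positivity
  -- key pointwise identity
  have key : ∀ (k : ℕ) (z : ℂ),
      ‖((k:ℂ) + (c:ℂ)) * z‖ ^ 2 * w (ξ+2) k = g k * (‖z‖ ^ 2 * w ξ k) := by
    intro k z
    have hnorm : ‖((k:ℂ) + (c:ℂ))‖ = |(k:ℝ)+c| := by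
      rw [show ((k:ℂ) + (c:ℂ)) = (((k:ℝ)+c : ℝ) : ℂ) from by push_cast; ring]
      exact Complex.norm_real _
    rw [norm_mul, hnorm, mul_pow, sq_abs, hratio k, hg_def]
    ring
  -- k + c ≠ 0
  have hkc : ∀ k : ℕ, ((k:ℝ)+c) ≠ 0 := by
    intro k h
    exact hc k (by linarith)
  have hgpos : ∀ k, 0 < g k := by
    intro k
    have hk0 : (0:ℝ) ≤ (k:ℝ) := Nat.cast_nonneg k
    have h1 : 0 < ((k:ℝ)+c)^2 :=
      lt_of_le_of_ne (sq_nonneg _) (Ne.symm (pow_ne_zero 2 (hkc k)))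
    have h2 : (0:ℝ) < (k:ℝ)+ξ+2 := by linarith
    have h3 : (0:ℝ) < (k:ℝ)+ξ+3 := by linarith
    have hξp : (0:ℝ) < (ξ+2)*(ξ+3) := by nlinarith
    exact mul_pos h1 (div_pos hξp (mul_pos h2 h3))
  -- upper bound
  set M₁ : ℝ := (1+|c|)^2 * ((ξ+2)*(ξ+3)) with hM₁def
  have hM₁pos : 0 < M₁ := by
    have hξp : (0:ℝ) < (ξ+2)*(ξ+3) := by nlinarith
    rw [hM₁def]; positivity
  have hgM : ∀ k, g k ≤ M₁ := by
    intro k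
    have hk0 : (0:ℝ) ≤ (k:ℝ) := Nat.cast_nonneg k
    have h2 : (0:ℝ) < (k:ℝ)+ξ+2 := by linarith
    have h3 : (0:ℝ) < (k:ℝ)+ξ+3 := by linarith
    have hD : (0:ℝ) < ((k:ℝ)+ξ+2)*((k:ℝ)+ξ+3) := mul_pos h2 h3
    simp only [hg_def, hM₁def]
    rw [mul_div_assoc', div_le_iff₀ hD]
    have habs : |(k:ℝ)+c| ≤ (1+|c|)*((k:ℝ)+1) := by
      have := abs_add_le (k:ℝ) c
      have h4 : |(k:ℝ)| = (k:ℝ) := abs_of_nonneg hk0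
      have h5 : (0:ℝ) ≤ |c| := abs_nonneg c
      nlinarith
    have hsq : ((k:ℝ)+c)^2 ≤ (1+|c|)^2*((k:ℝ)+1)^2 := by
      have := sq_abs ((k:ℝ)+c)
      nlinarith [abs_nonneg ((k:ℝ)+c), sq_nonneg ((k:ℝ)+c)]
    have hD2 : ((k:ℝ)+1)^2 ≤ ((k:ℝ)+ξ+2)*((k:ℝ)+ξ+3) := by nlinarith
    have hξp : (0:ℝ) < (ξ+2)*(ξ+3) := by nlinarith
    nlinarith [mul_le_mul_of_nonneg_left hsq hξp.le,
      mul_le_mul_of_nonneg_left hD2 (mul_nonneg (sq_nonneg (1+|c|)) hξp.le)]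
  -- lower bound via tail + finite min
  obtain ⟨m₁, hm₁pos, hm₁⟩ : ∃ m₁, 0 < m₁ ∧ ∀ k, m₁ ≤ g k := by
    apply exists_pos_forall_le' g hgpos (max 3 ⌈max (2*|c|) (ξ+3)⌉₊) ((ξ+2)*(ξ+3)/16)
      (by nlinarith)
    intro k hk
    have hk3 : 3 ≤ k := le_trans (le_max_left _ _) hk
    have hkc' : max (2*|c|) (ξ+3) ≤ (k:ℝ) := by
      calc max (2*|c|) (ξ+3) ≤ (⌈max (2*|c|) (ξ+3)⌉₊ : ℝ) := Nat.le_ceil _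
        _ ≤ (k:ℝ) := by exact_mod_cast le_trans (le_max_right _ _) hk
    have hkc1 : 2*|c| ≤ (k:ℝ) := le_trans (le_max_left _ _) hkc'
    have hkc2 : ξ+3 ≤ (k:ℝ) := le_trans (le_max_right _ _) hkc'
    have hcabs : -|c| ≤ c := neg_abs_le c
    have h1 : (k:ℝ)/2 ≤ (k:ℝ)+c := by linarith
    have hk0 : (0:ℝ) < (k:ℝ) := by exact_mod_cast Nat.lt_of_lt_of_le (by norm_num) hk3
    have hsq : (k:ℝ)^2/4 ≤ ((k:ℝ)+c)^2 := by nlinarith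
    have h2 : (0:ℝ) < (k:ℝ)+ξ+2 := by linarith
    have h3 : (0:ℝ) < (k:ℝ)+ξ+3 := by linarith
    have hD : ((k:ℝ)+ξ+2)*((k:ℝ)+ξ+3) ≤ 4*(k:ℝ)^2 := by nlinarith
    have hξp : (0:ℝ) < (ξ+2)*(ξ+3) := by nlinarith
    simp only [hg_def]
    rw [mul_div_assoc', div_le_div_iff₀ (by norm_num) (mul_pos h2 h3)]
    nlinarith [mul_le_mul_of_nonneg_left hD hξp.le, mul_le_mul_of_nonneg_left hsq hξp.le]
  have hm₁M₁ : m₁ ≤ M₁ := le_trans (hm₁ 0) (hgM 0)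
  refine ⟨Real.sqrt m₁, Real.sqrt M₁, Real.sqrt_pos.mpr hm₁pos,
    Real.sqrt_le_sqrt hm₁M₁, ?_, ?_⟩
  · intro a ha
    have hfun : (fun k : ℕ => ‖((k : ℂ) + (c : ℂ)) * a k‖ ^ 2 * w (ξ + 2) k)
        = fun k => g k * (‖a k‖ ^ 2 * w ξ k) := funext fun k => key k (a k)
    have hbase : ∀ k, 0 ≤ ‖a k‖ ^ 2 * w ξ k := fun k =>
      mul_nonneg (sq_nonneg _) (hwpos k).le
    have hT : Summable (fun k => g k * (‖a k‖ ^ 2 * w ξ k)) := by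
      apply Summable.of_nonneg_of_le (fun k => mul_nonneg (hgpos k).le (hbase k))
        (fun k => mul_le_mul_of_nonneg_right (hgM k) (hbase k)) (ha.mul_left M₁)
    have hSnn : 0 ≤ ∑' k : ℕ, ‖a k‖ ^ 2 * w ξ k := tsum_nonneg hbase
    have hTub : ∑' k, g k * (‖a k‖ ^ 2 * w ξ k) ≤ M₁ * ∑' k, ‖a k‖ ^ 2 * w ξ k := by
      rw [← tsum_mul_left]
      exact Summable.tsum_le_tsum (fun k => mul_le_mul_of_nonneg_right (hgM k) (hbase k)) hT
        (ha.mul_left M₁)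
    have hTlb : m₁ * ∑' k, ‖a k‖ ^ 2 * w ξ k ≤ ∑' k, g k * (‖a k‖ ^ 2 * w ξ k) := by
      rw [← tsum_mul_left]
      exact Summable.tsum_le_tsum (fun k => mul_le_mul_of_nonneg_right (hm₁ k) (hbase k))
        (ha.mul_left m₁) hT
    rw [hfun]
    refine ⟨hT, ?_, ?_⟩
    · calc Real.sqrt m₁ * Real.sqrt (∑' k, ‖a k‖ ^ 2 * w ξ k)
          = Real.sqrt (m₁ * ∑' k, ‖a k‖ ^ 2 * w ξ k) := (Real.sqrt_mul hm₁pos.le _).symm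
        _ ≤ _ := Real.sqrt_le_sqrt hTlb
    · calc Real.sqrt (∑' k, g k * (‖a k‖ ^ 2 * w ξ k))
          ≤ Real.sqrt (M₁ * ∑' k, ‖a k‖ ^ 2 * w ξ k) := Real.sqrt_le_sqrt hTub
        _ = Real.sqrt M₁ * Real.sqrt (∑' k, ‖a k‖ ^ 2 * w ξ k) := Real.sqrt_mul hM₁pos.le _
  · intro b hb
    have hkcC : ∀ k : ℕ, ((k:ℂ) + (c:ℂ)) ≠ 0 := by
      intro k h
      exact hkc k (by exact_mod_cast (show (((k:ℝ)+c : ℝ):ℂ) = 0 from by push_cast; exact h))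
    refine ⟨fun k => b k / ((k:ℂ) + (c:ℂ)), ?_, fun k => by
      rw [mul_comm, div_mul_cancel₀ _ (hkcC k)]⟩
    have heq : ∀ k : ℕ, g k * (‖b k / ((k:ℂ)+(c:ℂ))‖ ^ 2 * w ξ k) = ‖b k‖ ^ 2 * w (ξ+2) k := by
      intro k
      rw [← key k (b k / ((k:ℂ)+(c:ℂ))), mul_comm ((k:ℂ)+(c:ℂ)) _,
        div_mul_cancel₀ _ (hkcC k)]
    have hbase : ∀ k, 0 ≤ ‖b k / ((k:ℂ)+(c:ℂ))‖ ^ 2 * w ξ k := fun k =>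
      mul_nonneg (sq_nonneg _) (hwpos k).le
    apply Summable.of_nonneg_of_le hbase
      (fun k => ?_) (hb.mul_left m₁⁻¹)
    have h1 : m₁ * (‖b k / ((k:ℂ)+(c:ℂ))‖ ^ 2 * w ξ k) ≤ ‖b k‖ ^ 2 * w (ξ+2) k := by
      rw [← heq k]
      exact mul_le_mul_of_nonneg_right (hm₁ k) (hbase k)
    calc ‖b k / ((k:ℂ)+(c:ℂ))‖ ^ 2 * w ξ k
        = m₁⁻¹ * (m₁ * (‖b k / ((k:ℂ)+(c:ℂ))‖ ^ 2 * w ξ k)) := by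
          field_simp
      _ ≤ m₁⁻¹ * (‖b k‖ ^ 2 * w (ξ+2) k) :=
          mul_le_mul_of_nonneg_left h1 (inv_nonneg.mpr hm₁pos.le)
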